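/- Let A be a dual Banach algebra with predual A₊ and a bounded approximate identity. If the bidual A** (with the first Arens product) is ideally amenable, then A is ideally amenable. -/

import Mathlib

/-!
Restricting a functional `M ∈ A**` to the predual `P ⊆ A*` and reading the result in `A ≅ P*`
gives a bounded projection `π : A** → A` with `π ∘ κ = id` for the canonical embedding `κ`.
Separate weak*-continuity of the product says exactly that `P` is invariant under the
`A`-actions on `A*`, and this makes `π` multiplicative for the first Arens product. So `A` is a
retract of `A**` through algebra homomorphisms. For a closed ideal `I` of `A` and a derivation
`D : A → I*`, the ideal `π⁻¹(I)` of `A**` carries the derivation `M ↦ D (π M) ∘ π`; a functional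
implementing it as an inner derivation, composed with `κ`, implements `D`.
-/

set_option synthInstance.maxHeartbeats 400000
set_option maxHeartbeats 800000

namespace NormedSpace

/-- The topological dual of a normed space, as `NormedSpace.Dual` was defined in the older Mathlib. -/
abbrev Dual (𝕜 : Type*) [NontriviallyNormedField 𝕜] (E : Type*) [SeminormedAddCommGroup E]
    [NormedSpace 𝕜 E] : Type _ :=
  E →L[𝕜] 𝕜

end NormedSpace

open NormedSpace

noncomputable section

section GeneralProduct

variable {E : Type*} [NormedAddCommGroup E] [NormedSpace ℂ E]

/-- A closed two-sided ideal of the Banach algebra `(E, p)`, where `p` is a given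
(bounded bilinear) multiplication on the Banach space `E`. -/
structure IsClosedTwoSidedIdealW (p : E →L[ℂ] E →L[ℂ] E) (I : Submodule ℂ E) : Prop where
  isClosed : IsClosed (I : Set E)
  mul_left : ∀ (a : E) ⦃x : E⦄, x ∈ I → p a x ∈ I
  mul_right : ∀ (a : E) ⦃x : E⦄, x ∈ I → p x a ∈ I

/-- A derivation `(E, p) → I*` for the canonical dual bimodule actions. -/
def IsIdealDerivationW (p : E →L[ℂ] E →L[ℂ] E) (I : Submodule ℂ E)
    (hI : IsClosedTwoSidedIdealW p I) (D : E →L[ℂ] Dual ℂ I) : Prop :=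
  ∀ a b : E, ∀ i : I, D (p a b) i =
    D b ⟨p (i : E) a, hI.mul_right a i.2⟩ + D a ⟨p b (i : E), hI.mul_left b i.2⟩

/-- An inner derivation `(E, p) → I*`, i.e. `D = δ_ξ : a ↦ a·ξ - ξ·a`. -/
def IsInnerIdealDerivationW (p : E →L[ℂ] E →L[ℂ] E) (I : Submodule ℂ E)
    (hI : IsClosedTwoSidedIdealW p I) (D : E →L[ℂ] Dual ℂ I) : Prop :=
  ∃ ξ : Dual ℂ I, ∀ (a : E) (i : I),
    D a i = ξ ⟨p (i : E) a, hI.mul_right a i.2⟩ - ξ ⟨p a (i : E), hI.mul_left a i.2⟩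

/-- The Banach algebra `(E, p)` is ideally amenable. -/
def IdeallyAmenableW (p : E →L[ℂ] E →L[ℂ] E) : Prop :=
  ∀ (I : Submodule ℂ E) (hI : IsClosedTwoSidedIdealW p I) (D : E →L[ℂ] Dual ℂ I),
    IsIdealDerivationW p I hI D → IsInnerIdealDerivationW p I hI D

/-- The transpose adjoint of a bounded bilinear map: `⟨f*(z*, x), y⟩ = ⟨z*, f(x, y)⟩`. -/
def trAdj {X Y Z : Type*} [NormedAddCommGroup X] [NormedSpace ℂ X]
    [NormedAddCommGroup Y] [NormedSpace ℂ Y] [NormedAddCommGroup Z] [NormedSpace ℂ Z]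
    (f : X →L[ℂ] Y →L[ℂ] Z) : Dual ℂ Z →L[ℂ] X →L[ℂ] Dual ℂ Y :=
  (((ContinuousLinearMap.compL ℂ X (Y →L[ℂ] Z) (Dual ℂ Y)).comp
      (ContinuousLinearMap.compL ℂ Y Z ℂ)).flip) f

/-- The first Arens extension `f*** : X** × Y** → Z**`. -/
def arens3 {X Y Z : Type*} [NormedAddCommGroup X] [NormedSpace ℂ X]
    [NormedAddCommGroup Y] [NormedSpace ℂ Y] [NormedAddCommGroup Z] [NormedSpace ℂ Z]
    (f : X →L[ℂ] Y →L[ℂ] Z) :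
    Dual ℂ (Dual ℂ X) →L[ℂ] Dual ℂ (Dual ℂ Y) →L[ℂ] Dual ℂ (Dual ℂ Z) :=
  trAdj (trAdj (trAdj f))

end GeneralProduct

/-- `A` has a bounded approximate identity. -/
def HasBAI (A : Type*) [NonUnitalNormedRing A] : Prop :=
  ∃ l : Filter A, l.NeBot ∧ (∃ C : ℝ, ∀ᶠ e in l, ‖e‖ ≤ C) ∧
    ∀ a : A, Filter.Tendsto (fun e => a * e) l (nhds a) ∧
      Filter.Tendsto (fun e => e * a) l (nhds a)

section Retract

variable {E F : Type*} [NormedAddCommGroup E] [NormedSpace ℂ E] [NormedAddCommGroup F]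
  [NormedSpace ℂ F] {p : E →L[ℂ] E →L[ℂ] E} {q : F →L[ℂ] F →L[ℂ] F} {π : E →L[ℂ] F}
  {I : Submodule ℂ F}

theorem IsClosedTwoSidedIdealW.comap (hπ : ∀ x y, π (p x y) = q (π x) (π y))
    (hI : IsClosedTwoSidedIdealW q I) : IsClosedTwoSidedIdealW p (I.comap π.toLinearMap) where
  isClosed := hI.isClosed.preimage π.continuous
  mul_left a x hx := by
    simpa only [Submodule.mem_comap, ContinuousLinearMap.coe_coe, hπ] using hI.mul_left (π a) hx
  mul_right a x hx := by
    simpa only [Submodule.mem_comap, ContinuousLinearMap.coe_coe, hπ] using hI.mul_right (π a) hx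

variable (π I) in
def comapRestrict : I.comap π.toLinearMap →L[ℂ] I :=
  (π.comp (I.comap π.toLinearMap).subtypeL).codRestrict I fun x => x.2

variable (π) in
def derivationComap (D : F →L[ℂ] Dual ℂ I) : E →L[ℂ] Dual ℂ (I.comap π.toLinearMap) :=
  ((ContinuousLinearMap.compL ℂ _ I ℂ).flip (comapRestrict π I)).comp (D.comp π)

theorem derivationComap_apply (D : F →L[ℂ] Dual ℂ I) (x : E) (j : I.comap π.toLinearMap) :
    derivationComap π D x j = D (π x) (comapRestrict π I j) :=
  rfl

theorem IsIdealDerivationW.comap (hπ : ∀ x y, π (p x y) = q (π x) (π y))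
    (hI : IsClosedTwoSidedIdealW q I) {D : F →L[ℂ] Dual ℂ I} (hD : IsIdealDerivationW q I hI D) :
    IsIdealDerivationW p _ (hI.comap hπ) (derivationComap π D) := by
  intro x y j
  simp only [derivationComap_apply, hπ]
  rw [hD]
  congr 2 <;> exact Subtype.ext (hπ _ _).symm

theorem IsInnerIdealDerivationW.of_comap {κ : F →L[ℂ] E} (hκ : ∀ a b, κ (q a b) = p (κ a) (κ b))
    (hπκ : ∀ a, π (κ a) = a) (hπ : ∀ x y, π (p x y) = q (π x) (π y))
    (hI : IsClosedTwoSidedIdealW q I) {D : F →L[ℂ] Dual ℂ I}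
    (h : IsInnerIdealDerivationW p _ (hI.comap hπ) (derivationComap π D)) :
    IsInnerIdealDerivationW q I hI D := by
  obtain ⟨ξ, hξ⟩ := h
  let σ : I →L[ℂ] I.comap π.toLinearMap :=
    (κ.comp I.subtypeL).codRestrict _ fun i => by simp [hπκ]
  refine ⟨ξ.comp σ, fun a i => ?_⟩
  have hσ : comapRestrict π I (σ i) = i := Subtype.ext (hπκ i)
  have := hξ (κ a) (σ i)
  rw [derivationComap_apply, hπκ, hσ] at this
  rw [this, ContinuousLinearMap.comp_apply, ContinuousLinearMap.comp_apply]
  congr 2 <;> exact Subtype.ext (hκ _ _).symm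

theorem IdeallyAmenableW.of_retract (κ : F →L[ℂ] E) (π : E →L[ℂ] F)
    (hκ : ∀ a b, κ (q a b) = p (κ a) (κ b)) (hπ : ∀ x y, π (p x y) = q (π x) (π y))
    (hπκ : ∀ a, π (κ a) = a) (h : IdeallyAmenableW p) : IdeallyAmenableW q :=
  fun _ hI _ hD => (h _ (hI.comap hπ) _ (hD.comap hπ hI)).of_comap hκ hπκ hπ hI

end Retract

theorem exists_eq_apply_of_continuous_weakDual {𝕜 P : Type*} [NontriviallyNormedField 𝕜]
    [NormedAddCommGroup P] [NormedSpace 𝕜 P] (φ : StrongDual 𝕜 P →ₗ[𝕜] 𝕜)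
    (hφ : Continuous fun f : WeakDual 𝕜 P => φ (WeakDual.toStrongDual f)) :
    ∃ q : P, ∀ f : StrongDual 𝕜 P, φ f = f q := by
  obtain ⟨q, hq⟩ := LinearMap.dualEmbedding_surjective (topDualPairing 𝕜 P)
    ⟨φ ∘ₗ WeakDual.toStrongDual.toLinearMap, hφ⟩
  exact ⟨q, fun f => (DFunLike.congr_fun hq (StrongDual.toWeakDual f)).symm⟩

theorem arens3_mul_inclusionInDoubleDual {A : Type*} [NonUnitalNormedRing A] [NormedSpace ℂ A]
    [IsScalarTower ℂ A A] [SMulCommClass ℂ A A] (x y : A) :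
    arens3 (ContinuousLinearMap.mul ℂ A) (inclusionInDoubleDual ℂ A x)
      (inclusionInDoubleDual ℂ A y) = inclusionInDoubleDual ℂ A (x * y) :=
  rfl

section DualBanachAlgebra

variable {A : Type*} [NonUnitalNormedRing A] [NormedSpace ℂ A]
  {P : Type*} [NormedAddCommGroup P] [NormedSpace ℂ P] (e : A ≃ₗᵢ[ℂ] Dual ℂ P)

def SeparatelyWeakStarContinuousMul : Prop :=
  ∀ a : A,
    Continuous (fun m : WeakDual ℂ P =>
      StrongDual.toWeakDual (e (a * e.symm (WeakDual.toStrongDual m)))) ∧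
    Continuous (fun m : WeakDual ℂ P =>
      StrongDual.toWeakDual (e (e.symm (WeakDual.toStrongDual m) * a)))

def predualEmbedding : P →L[ℂ] Dual ℂ A :=
  e.toLinearIsometry.toContinuousLinearMap.flip

@[simp]
theorem predualEmbedding_apply (p : P) (a : A) : predualEmbedding e p a = e a p :=
  rfl

def bidualProjection : Dual ℂ (Dual ℂ A) →L[ℂ] A :=
  e.symm.toLinearIsometry.toContinuousLinearMap.comp
    ((ContinuousLinearMap.compL ℂ P (Dual ℂ A) ℂ).flip (predualEmbedding e))

@[simp]
theorem apply_bidualProjection (M : Dual ℂ (Dual ℂ A)) (p : P) :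
    e (bidualProjection e M) p = M (predualEmbedding e p) := by
  simp [bidualProjection]

@[simp]
theorem bidualProjection_inclusionInDoubleDual (a : A) :
    bidualProjection e (inclusionInDoubleDual ℂ A a) = a :=
  e.injective <| ContinuousLinearMap.ext fun _ => by simp

variable {e}

theorem exists_predual_mul_left [SMulCommClass ℂ A A] (hw : SeparatelyWeakStarContinuousMul e)
    (a : A) (p : P) : ∃ q : P, ∀ y : A, e (a * y) p = e y q := by
  obtain ⟨q, hq⟩ := exists_eq_apply_of_continuous_weakDual
    { toFun := fun f => e (a * e.symm f) p
      map_add' := fun f g => by simp [mul_add]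
      map_smul' := fun c f => by simp [mul_smul_comm] }
    ((WeakDual.eval_continuous p).comp (hw a).1)
  exact ⟨q, fun y => by simpa using hq (e y)⟩

theorem exists_predual_mul_right [IsScalarTower ℂ A A] (hw : SeparatelyWeakStarContinuousMul e)
    (a : A) (p : P) : ∃ q : P, ∀ x : A, e (x * a) p = e x q := by
  obtain ⟨q, hq⟩ := exists_eq_apply_of_continuous_weakDual
    { toFun := fun f => e (e.symm f * a) p
      map_add' := fun f g => by simp [add_mul]
      map_smul' := fun c f => by simp [smul_mul_assoc] }
    ((WeakDual.eval_continuous p).comp (hw a).2)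
  exact ⟨q, fun x => by simpa using hq (e x)⟩

variable [IsScalarTower ℂ A A] [SMulCommClass ℂ A A]

theorem trAdj_mul_predualEmbedding {x : A} {p q : P} (hq : ∀ y, e (x * y) p = e y q) :
    trAdj (ContinuousLinearMap.mul ℂ A) (predualEmbedding e p) x = predualEmbedding e q :=
  ContinuousLinearMap.ext hq

theorem trAdj_trAdj_mul_predualEmbedding (hw : SeparatelyWeakStarContinuousMul e)
    (N : Dual ℂ (Dual ℂ A)) {p q : P} (hq : ∀ x, e (x * bidualProjection e N) p = e x q) :
    trAdj (trAdj (ContinuousLinearMap.mul ℂ A)) N (predualEmbedding e p) =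
      predualEmbedding e q := by
  ext x
  obtain ⟨r, hr⟩ := exists_predual_mul_left hw x p
  calc N (trAdj (ContinuousLinearMap.mul ℂ A) (predualEmbedding e p) x)
      = N (predualEmbedding e r) := by rw [trAdj_mul_predualEmbedding hr]
    _ = e (x * bidualProjection e N) p := by rw [hr, apply_bidualProjection]
    _ = e x q := hq x

theorem bidualProjection_arens3_mul (hw : SeparatelyWeakStarContinuousMul e)
    (M N : Dual ℂ (Dual ℂ A)) :
    bidualProjection e (arens3 (ContinuousLinearMap.mul ℂ A) M N) =
      bidualProjection e M * bidualProjection e N := by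
  refine e.injective <| ContinuousLinearMap.ext fun p => ?_
  obtain ⟨q, hq⟩ := exists_predual_mul_right hw (bidualProjection e N) p
  rw [apply_bidualProjection]
  calc M (trAdj (trAdj (ContinuousLinearMap.mul ℂ A)) N (predualEmbedding e p))
      = M (predualEmbedding e q) := by rw [trAdj_trAdj_mul_predualEmbedding hw N hq]
    _ = e (bidualProjection e M * bidualProjection e N) p := by
      rw [hq, apply_bidualProjection]

end DualBanachAlgebra

theorem ideallyAmenable_of_bidual_dualBanachAlgebra_general
    {A : Type*} [NonUnitalNormedRing A] [NormedSpace ℂ A]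
    [IsScalarTower ℂ A A] [SMulCommClass ℂ A A]
    {P : Type*} [NormedAddCommGroup P] [NormedSpace ℂ P]
    (e : A ≃ₗᵢ[ℂ] Dual ℂ P)
    (hw : ∀ a : A,
      Continuous (fun m : WeakDual ℂ P =>
        StrongDual.toWeakDual (e (a * e.symm (WeakDual.toStrongDual m)))) ∧
      Continuous (fun m : WeakDual ℂ P =>
        StrongDual.toWeakDual (e (e.symm (WeakDual.toStrongDual m) * a))))
    (hbidual : IdeallyAmenableW (E := Dual ℂ (Dual ℂ A)) (arens3 (X := A) (Y := A) (Z := A) (ContinuousLinearMap.mul ℂ A))) :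
    IdeallyAmenableW (E := A) (ContinuousLinearMap.mul ℂ A) :=
  hbidual.of_retract (inclusionInDoubleDual ℂ A) (bidualProjection e)
    (fun x y => (arens3_mul_inclusionInDoubleDual x y).symm)
    (bidualProjection_arens3_mul hw) (bidualProjection_inclusionInDoubleDual e)

/-- Let `A` be a dual Banach algebra (with predual `P`, so `A ≅ P*`
isometrically and multiplication is separately weak*-continuous) having a bounded
approximate identity.  If the bidual `A**` with the first Arens product is ideally
amenable, then `A` is ideally amenable. -/
theorem ideallyAmenable_of_bidual_dualBanachAlgebra
    {A : Type*} [NonUnitalNormedRing A] [NormedSpace ℂ A]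
    [IsScalarTower ℂ A A] [SMulCommClass ℂ A A] [CompleteSpace A]
    {P : Type*} [NormedAddCommGroup P] [NormedSpace ℂ P] [CompleteSpace P]
    (e : A ≃ₗᵢ[ℂ] Dual ℂ P)
    (hw : ∀ a : A,
      Continuous (fun m : WeakDual ℂ P =>
        StrongDual.toWeakDual (e (a * e.symm (WeakDual.toStrongDual m)))) ∧
      Continuous (fun m : WeakDual ℂ P =>
        StrongDual.toWeakDual (e (e.symm (WeakDual.toStrongDual m) * a))))
    (hBAI : HasBAI A)
    (hbidual : IdeallyAmenableW (E := Dual ℂ (Dual ℂ A)) (arens3 (X := A) (Y := A) (Z := A) (ContinuousLinearMap.mul ℂ A))) :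
    IdeallyAmenableW (E := A) (ContinuousLinearMap.mul ℂ A) :=
  ideallyAmenable_of_bidual_dualBanachAlgebra_general e hw hbidual
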